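/- arXiv:math/0602087 — 2 statements merged into one kernel-verified Lean document; each statement's English description precedes it below -/
import Mathlib

section
/- (Polynomial reproduction, equation (2E) of the paper for μ = 0.) If p ∈ P_q and s(x) := Σ_{i=1}^M a_i φ(‖x − x_i‖) + Σ_{i=1}^Q b_i p_i(x) is the interpolant determined by the unique solution (a, b) of the system A a + P b = (p(x_1), …, p(x_M))ᵀ, Pᵀ a = 0, then s = p on all of ℝⁿ; equivalently, the Lagrange basis functions u_1, …, u_M satisfy Σ_{j=1}^M u_j(x) p(x_j) = p(x) for all x ∈ ℝⁿ and all p ∈ P_q. -/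
open Matrix

/-- Polynomial reproduction, equation (2E) of the paper for μ = 0:
if p ∈ P_q and s is the interpolant of the data (x_j, p(x_j)), then s = p on all of ℝⁿ. -/
theorem polynomial_reproduction
    (n M q Q : ℕ) (hn : 0 < n) (hM : 0 < M) (hq : 0 < q)
    (x : Fin M → EuclideanSpace ℝ (Fin n))
    (hx : Function.Injective x)
    (pb : Fin Q → MvPolynomial (Fin n) ℝ)
    (hdeg : ∀ i, (pb i).totalDegree < q)
    (hind : LinearIndependent ℝ pb)
    (hspan : ∀ p : MvPolynomial (Fin n) ℝ, p.totalDegree < q →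
      p ∈ Submodule.span ℝ (Set.range pb))
    (huni : ∀ p : MvPolynomial (Fin n) ℝ, p.totalDegree < q →
      (∀ j, MvPolynomial.eval (fun l => x j l) p = 0) → p = 0)
    (φ : ℝ → ℝ)
    (hcpd : ∀ c : Fin M → ℝ, c ≠ 0 →
      (∀ p : MvPolynomial (Fin n) ℝ, p.totalDegree < q →
        ∑ j, c j * MvPolynomial.eval (fun l => x j l) p = 0) →
      0 < ∑ j, ∑ k, c j * c k * φ ‖x j - x k‖)
    (A : Matrix (Fin M) (Fin M) ℝ)
    (hA : ∀ j k, A j k = φ ‖x j - x k‖)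
    (P : Matrix (Fin M) (Fin Q) ℝ)
    (hP : ∀ j i, P j i = MvPolynomial.eval (fun l => x j l) (pb i))
    -- the polynomial p of degree < q and the interpolation coefficients (a, b)
    (p : MvPolynomial (Fin n) ℝ) (hp : p.totalDegree < q)
    (a : Fin M → ℝ) (b : Fin Q → ℝ)
    (hab : A *ᵥ a + P *ᵥ b = fun j => MvPolynomial.eval (fun l => x j l) p)
    (hPa : Pᵀ *ᵥ a = 0) :
    ∀ y : EuclideanSpace ℝ (Fin n),
      (∑ i, a i * φ ‖y - x i‖) + (∑ i, b i * MvPolynomial.eval (fun l => y l) (pb i)) =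
        MvPolynomial.eval (fun l => y l) p := by
  classical
  -- The linear functional p' ↦ ∑ j, a j * p'(x j)
  set L : MvPolynomial (Fin n) ℝ →ₗ[ℝ] ℝ :=
    { toFun := fun p' => ∑ j, a j * MvPolynomial.eval (fun l => x j l) p'
      map_add' := by
        intro u v
        simp [mul_add, Finset.sum_add_distrib]
      map_smul' := by
        intro c u
        simp [Finset.mul_sum, mul_left_comm] } with hL
  have hLrange : ∀ v ∈ Set.range pb, L v = 0 := by
    rintro v ⟨i, rfl⟩
    have h0 := congrFun hPa i
    simp only [Matrix.mulVec, dotProduct, Matrix.transpose_apply, Pi.zero_apply] at h0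
    simp only [hL, LinearMap.coe_mk, AddHom.coe_mk]
    rw [← h0]
    exact Finset.sum_congr rfl fun j _ => by rw [hP, mul_comm]
  have hLzero : ∀ p' : MvPolynomial (Fin n) ℝ, p'.totalDegree < q → L p' = 0 := by
    intro p' hp'
    have hmem := hspan p' hp'
    have hle : Submodule.span ℝ (Set.range pb) ≤ LinearMap.ker L := by
      rw [Submodule.span_le]
      intro v hv
      exact hLrange v hv
    exact hle hmem
  -- a = 0
  have ha : a = 0 := by
    by_contra hane
    have hpos := hcpd a hane (fun p' hp' => hLzero p' hp')
    -- compute the quadratic form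
    have hq1 : ∑ j, ∑ k, a j * a k * φ ‖x j - x k‖ = a ⬝ᵥ (A *ᵥ a) := by
      simp only [dotProduct, Matrix.mulVec, hA, Finset.mul_sum, mul_assoc]
      exact Finset.sum_congr rfl fun j _ => Finset.sum_congr rfl fun k _ => by ring
    have haPb : a ⬝ᵥ (P *ᵥ b) = 0 := by
      rw [Matrix.dotProduct_mulVec, ← Matrix.mulVec_transpose, hPa]
      simp [dotProduct]
    have hap : a ⬝ᵥ (fun j => MvPolynomial.eval (fun l => x j l) p) = 0 :=
      hLzero p hp
    have : a ⬝ᵥ (A *ᵥ a) = 0 := by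
      have := congrArg (fun v => a ⬝ᵥ v) hab
      simp only [dotProduct_add] at this
      rw [haPb, add_zero] at this
      rw [this, hap]
    rw [hq1, this] at hpos
    exact lt_irrefl 0 hpos
  -- hence P *ᵥ b = values of p
  have hPb : ∀ j, ∑ i, b i * MvPolynomial.eval (fun l => x j l) (pb i)
      = MvPolynomial.eval (fun l => x j l) p := by
    intro j
    have := congrFun hab j
    simp only [ha, Matrix.mulVec_zero, Pi.add_apply, Pi.zero_apply, zero_add] at this
    rw [← this]
    simp only [Matrix.mulVec, dotProduct, hP]
    exact Finset.sum_congr rfl fun i _ => mul_comm _ _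
  -- the residual polynomial is zero
  have hrdeg : ((∑ i, b i • pb i) - p).totalDegree < q := by
    have h1 : (∑ i, b i • pb i).totalDegree < q := by
      refine lt_of_le_of_lt (MvPolynomial.totalDegree_finset_sum _ _) ?_
      rw [Finset.sup_lt_iff (by exact_mod_cast hq)]
      intro i _
      exact lt_of_le_of_lt (MvPolynomial.totalDegree_smul_le _ _) (hdeg i)
    rw [sub_eq_add_neg]
    calc ((∑ i, b i • pb i) + -p).totalDegree ≤ max (∑ i, b i • pb i).totalDegree (-p).totalDegree :=
          MvPolynomial.totalDegree_add _ _
      _ < q := by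
          rw [MvPolynomial.totalDegree_neg]
          exact max_lt h1 hp
  have hrzero : (∑ i, b i • pb i) - p = 0 := by
    refine huni _ hrdeg fun j => ?_
    simp only [map_sub, map_sum, MvPolynomial.smul_eval]
    rw [hPb j]
    ring
  have hreq : (∑ i, b i • pb i) = p := by
    have := sub_eq_zero.mp hrzero
    exact this
  intro y
  have hyval : ∑ i, b i * MvPolynomial.eval (fun l => y l) (pb i)
      = MvPolynomial.eval (fun l => y l) p := by
    rw [← hreq]
    simp [map_sum, MvPolynomial.smul_eval]
  simp [ha, hyval]
end

section
/- (Cauchy–Schwarz step leading to Theorem 2.5, case μ = 0.) Assume in addition that ψ̂(t) > 0 for almost every t ∈ ℝⁿ. Let f : ℝⁿ → ℝ be integrable with an integrable Fourier transform f̂ satisfying f(x) = (2π)^{−n} ∫_{ℝⁿ} e^{i⟨x,t⟩} f̂(t) dt for all x, and suppose c_f² := (2π)^{−n} ∫_{ℝⁿ} |f̂(t)|² (ψ̂(t))^{−1} dt < ∞. Then for any x, x_1, …, x_M ∈ ℝⁿ and any u_1, …, u_M ∈ ℝ, |Σ_{j=1}^M u_j f(x_j) − f(x)| ≤ κ ·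 c_f, where κ² := (2π)^{−n} ∫_{ℝⁿ} |Σ_{j=1}^M u_j e^{i⟨x_j,t⟩} − e^{i⟨x,t⟩}|² ψ̂(t) dt. -/
/-!
Fourier inversion turns `∑ⱼ uⱼ f(xⱼ) - f(x)` into `(2π)⁻ⁿ ∫ g f̂` with
`g(t) = ∑ⱼ uⱼ e^{i⟨xⱼ,t⟩} - e^{i⟨x,t⟩}`, and Cauchy–Schwarz applied to the splitting
`g f̂ = (g √ψ̂) (f̂ / √ψ̂)`, legitimate since `ψ̂ > 0` a.e., bounds it by `κ c_f`.
-/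

open MeasureTheory

/-- e^{i⟨y,t⟩}, with the Euclidean inner product on ℝⁿ. -/
noncomputable def expI {n : ℕ} (y t : EuclideanSpace ℝ (Fin n)) : ℂ :=
  Complex.exp (Complex.I * ((inner ℝ y t : ℝ) : ℂ))

/-- The constant (2π)^{−n}. -/
noncomputable def c2pin (n : ℕ) : ℝ := ((2 * Real.pi) ^ n)⁻¹

section CauchySchwarz

variable {α : Type*} [MeasurableSpace α] {μ : Measure α}

theorem integral_norm_mul_norm_le_sqrt_mul_sqrt {E : Type*} [NormedAddCommGroup E] {f g : α → E}
    (hf : MemLp f 2 μ) (hg : MemLp g 2 μ) :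
    ∫ a, ‖f a‖ * ‖g a‖ ∂μ ≤ √(∫ a, ‖f a‖ ^ 2 ∂μ) * √(∫ a, ‖g a‖ ^ 2 ∂μ) := by
  have h := integral_mul_norm_le_Lp_mul_Lq Real.HolderConjugate.two_two
    (by simpa using hf) (by simpa using hg)
  simpa [Real.sqrt_eq_rpow] using h

theorem norm_integral_mul_le_sqrt_mul_sqrt_of_weight {𝕜 : Type*} [RCLike 𝕜] {F G : α → 𝕜}
    {w : α → ℝ} (hw : ∀ᵐ a ∂μ, 0 < w a) (hF : AEStronglyMeasurable F μ)
    (hG : AEStronglyMeasurable G μ) (hwm : AEStronglyMeasurable w μ)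
    (hFw : Integrable (fun a => ‖F a‖ ^ 2 * w a) μ)
    (hGw : Integrable (fun a => ‖G a‖ ^ 2 * (w a)⁻¹) μ) :
    ‖∫ a, F a * G a ∂μ‖ ≤
      √(∫ a, ‖F a‖ ^ 2 * w a ∂μ) * √(∫ a, ‖G a‖ ^ 2 * (w a)⁻¹ ∂μ) := by
  set A : α → ℝ := fun a => ‖F a‖ * √(w a)
  set B : α → ℝ := fun a => ‖G a‖ * (√(w a))⁻¹
  have hsqrt : AEStronglyMeasurable (fun a => √(w a)) μ :=
    Real.continuous_sqrt.comp_aestronglyMeasurable hwm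
  have hA_sq : (fun a => ‖A a‖ ^ 2) =ᵐ[μ] fun a => ‖F a‖ ^ 2 * w a := by
    filter_upwards [hw] with a ha
    simp [A, mul_pow, Real.sq_sqrt ha.le]
  have hB_sq : (fun a => ‖B a‖ ^ 2) =ᵐ[μ] fun a => ‖G a‖ ^ 2 * (w a)⁻¹ := by
    filter_upwards [hw] with a ha
    simp [B, mul_pow, inv_pow, Real.sq_sqrt ha.le]
  have hAB : (fun a => ‖A a‖ * ‖B a‖) =ᵐ[μ] fun a => ‖F a * G a‖ := by
    filter_upwards [hw] with a ha
    have : √(w a) ≠ 0 := (Real.sqrt_pos.2 ha).ne'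
    simp only [A, B, norm_mul, norm_inv, Real.norm_eq_abs, abs_norm,
      abs_of_nonneg (Real.sqrt_nonneg _)]
    field_simp
  have hA : MemLp A 2 μ :=
    (memLp_two_iff_integrable_sq_norm (hF.norm.mul hsqrt)).2 (hFw.congr hA_sq.symm)
  have hB : MemLp B 2 μ :=
    (memLp_two_iff_integrable_sq_norm (hG.norm.mul hsqrt.aemeasurable.inv.aestronglyMeasurable)).2
      (hGw.congr hB_sq.symm)
  calc ‖∫ a, F a * G a ∂μ‖ ≤ ∫ a, ‖F a * G a‖ ∂μ := norm_integral_le_integral_norm _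
    _ = ∫ a, ‖A a‖ * ‖B a‖ ∂μ := (integral_congr_ae hAB).symm
    _ ≤ √(∫ a, ‖A a‖ ^ 2 ∂μ) * √(∫ a, ‖B a‖ ^ 2 ∂μ) :=
      integral_norm_mul_norm_le_sqrt_mul_sqrt hA hB
    _ = _ := by rw [integral_congr_ae hA_sq, integral_congr_ae hB_sq]

end CauchySchwarz

section expI

variable {n : ℕ}

theorem norm_expI (y t : EuclideanSpace ℝ (Fin n)) : ‖expI y t‖ = 1 := by
  simp [expI, Complex.norm_exp]

@[fun_prop]
theorem continuous_expI (y : EuclideanSpace ℝ (Fin n)) : Continuous (expI y) := by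
  unfold expI
  fun_prop

variable {μ : Measure (EuclideanSpace ℝ (Fin n))}

theorem integrable_expI_mul {F : EuclideanSpace ℝ (Fin n) → ℂ} (hF : Integrable F μ)
    (y : EuclideanSpace ℝ (Fin n)) : Integrable (fun t => expI y t * F t) μ :=
  hF.bdd_mul (continuous_expI y).aestronglyMeasurable
    (Filter.Eventually.of_forall fun t => (norm_expI y t).le)

variable {M : ℕ} (u : Fin M → ℝ) (xs : Fin M → EuclideanSpace ℝ (Fin n))
  (x : EuclideanSpace ℝ (Fin n))

theorem continuous_sum_mul_expI_sub_expI :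
    Continuous fun t => (∑ j, (u j : ℂ) * expI (xs j) t) - expI x t := by
  fun_prop

theorem norm_sum_mul_expI_sub_expI_le (t : EuclideanSpace ℝ (Fin n)) :
    ‖(∑ j, (u j : ℂ) * expI (xs j) t) - expI x t‖ ≤ ∑ j, |u j| + 1 := by
  refine (norm_sub_le _ _).trans (add_le_add ((norm_sum_le _ _).trans_eq ?_) (norm_expI x t).le)
  simp [norm_expI]

theorem integral_sum_mul_expI_sub_expI_mul {F : EuclideanSpace ℝ (Fin n) → ℂ}
    (hF : Integrable F μ) :
    ∫ t, ((∑ j, (u j : ℂ) * expI (xs j) t) - expI x t) * F t ∂μ =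
      (∑ j, (u j : ℂ) * ∫ t, expI (xs j) t * F t ∂μ) - ∫ t, expI x t * F t ∂μ := by
  have hterm (j : Fin M) : Integrable (fun t => (u j : ℂ) * (expI (xs j) t * F t)) μ :=
    (integrable_expI_mul hF (xs j)).const_mul _
  simp_rw [sub_mul, Finset.sum_mul, mul_assoc]
  rw [integral_sub (integrable_finsetSum _ fun j _ => hterm j) (integrable_expI_mul hF x),
    integral_finsetSum _ fun j _ => hterm j]
  simp_rw [integral_const_mul]

end expI

theorem cauchy_schwarz_error_bound_general
    (n M : ℕ)
    (ψhat : EuclideanSpace ℝ (Fin n) → ℝ)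
    (hψhat_int : Integrable ψhat)
    (hψhat_pos : ∀ᵐ t : EuclideanSpace ℝ (Fin n), 0 < ψhat t)
    (f : EuclideanSpace ℝ (Fin n) → ℝ)
    (fhat : EuclideanSpace ℝ (Fin n) → ℂ) (hfhat_int : Integrable fhat)
    (hfinv : ∀ y : EuclideanSpace ℝ (Fin n),
      (f y : ℂ) = (c2pin n : ℂ) * ∫ t, expI y t * fhat t)
    (hcf_fin : Integrable (fun t : EuclideanSpace ℝ (Fin n) => ‖fhat t‖ ^ 2 * (ψhat t)⁻¹))
    (x : EuclideanSpace ℝ (Fin n)) (xs : Fin M → EuclideanSpace ℝ (Fin n))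
    (u : Fin M → ℝ) :
    |(∑ j, u j * f (xs j)) - f x| ≤
      Real.sqrt (c2pin n * ∫ t, ‖(∑ j, (u j : ℂ) * expI (xs j) t) - expI x t‖ ^ 2 * ψhat t) *
        Real.sqrt (c2pin n * ∫ t, ‖fhat t‖ ^ 2 * (ψhat t)⁻¹) := by
  set g := fun t => (∑ j, (u j : ℂ) * expI (xs j) t) - expI x t
  have hc : 0 ≤ c2pin n := by unfold c2pin; positivity
  have hg : Continuous g := continuous_sum_mul_expI_sub_expI u xs x
  have hrepr : (((∑ j, u j * f (xs j)) - f x : ℝ) : ℂ) = c2pin n * ∫ t, g t * fhat t := by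
    simp_rw [g, integral_sum_mul_expI_sub_expI_mul u xs x hfhat_int]
    push_cast
    simp_rw [hfinv, mul_sub, Finset.mul_sum, mul_left_comm]
  have hgψ : Integrable fun t => ‖g t‖ ^ 2 * ψhat t :=
    hψhat_int.bdd_mul (hg.norm.pow 2).aestronglyMeasurable (c := (∑ j, |u j| + 1) ^ 2)
      (Filter.Eventually.of_forall fun t => by
        simpa using pow_le_pow_left₀ (norm_nonneg _)
          (norm_sum_mul_expI_sub_expI_le u xs x t) 2)
  calc |(∑ j, u j * f (xs j)) - f x|
      = c2pin n * ‖∫ t, g t * fhat t‖ := by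
        rw [← Real.norm_eq_abs, ← Complex.norm_real, hrepr, norm_mul, Complex.norm_real,
          Real.norm_of_nonneg hc]
    _ ≤ c2pin n * (√(∫ t, ‖g t‖ ^ 2 * ψhat t) * √(∫ t, ‖fhat t‖ ^ 2 * (ψhat t)⁻¹)) := by
        gcongr
        exact norm_integral_mul_le_sqrt_mul_sqrt_of_weight hψhat_pos hg.aestronglyMeasurable
          hfhat_int.aestronglyMeasurable hψhat_int.aestronglyMeasurable hgψ hcf_fin
    _ = _ := by
        rw [Real.sqrt_mul hc, Real.sqrt_mul hc, mul_mul_mul_comm, Real.mul_self_sqrt hc]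

/-- Cauchy–Schwarz step leading to Theorem 2.5, case μ = 0:
|Σ_j u_j f(x_j) − f(x)| ≤ κ · c_f, where
κ² = (2π)^{−n} ∫ |Σ_j u_j e^{i⟨x_j,t⟩} − e^{i⟨x,t⟩}|² ψ̂(t) dt and
c_f² = (2π)^{−n} ∫ |f̂(t)|² (ψ̂(t))⁻¹ dt < ∞. -/
theorem cauchy_schwarz_error_bound
    (n M : ℕ)
    (ψ : EuclideanSpace ℝ (Fin n) → ℝ) (hψcont : Continuous ψ)
    (ψhat : EuclideanSpace ℝ (Fin n) → ℝ)
    (hψhat_nonneg : ∀ t, 0 ≤ ψhat t)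
    (hψhat_int : Integrable ψhat)
    (hψhat_pos : ∀ᵐ t : EuclideanSpace ℝ (Fin n), 0 < ψhat t)
    (hψinv : ∀ y : EuclideanSpace ℝ (Fin n),
      (ψ y : ℂ) = (c2pin n : ℂ) * ∫ t, expI y t * (ψhat t : ℂ))
    (f : EuclideanSpace ℝ (Fin n) → ℝ) (hf_int : Integrable f)
    (fhat : EuclideanSpace ℝ (Fin n) → ℂ) (hfhat_int : Integrable fhat)
    (hfinv : ∀ y : EuclideanSpace ℝ (Fin n),
      (f y : ℂ) = (c2pin n : ℂ) * ∫ t, expI y t * fhat t)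
    (hcf_fin : Integrable (fun t : EuclideanSpace ℝ (Fin n) => ‖fhat t‖ ^ 2 * (ψhat t)⁻¹))
    (x : EuclideanSpace ℝ (Fin n)) (xs : Fin M → EuclideanSpace ℝ (Fin n))
    (u : Fin M → ℝ) :
    |(∑ j, u j * f (xs j)) - f x| ≤
      Real.sqrt (c2pin n * ∫ t, ‖(∑ j, (u j : ℂ) * expI (xs j) t) - expI x t‖ ^ 2 * ψhat t) *
        Real.sqrt (c2pin n * ∫ t, ‖fhat t‖ ^ 2 * (ψhat t)⁻¹) :=
  cauchy_schwarz_error_bound_general n M ψhat hψhat_int hψhat_pos f fhat hfhat_int hfinv hcf_fin x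
    xs u
end
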